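/- Let (p,l) be an irregular pair. Then \Delta_{(p,l)} \equiv p^{-2}( S_{l+p-1}(p)/(l-1) - S_l(p)/l ) (mod p), where \Delta_{(p,l)} \equiv p^{-1}( B_{l+p-1}/(l+p-1) - B_l/l ) (mod p) with 0 \le \Delta_{(p,l)} < p. -/

import Mathlib

/-!
Faulhaber's formula gives `S_n(p) - p B_n = ∑_{i<n} B_i (n choose i) p^(n+1-i) / (n+1-i)`.
By von Staudt–Clausen every `p B_i` is `p`-integral, and so is `B_i` itself for even `i` with
`(p-1) ∤ i`. For even `n ≥ 4` with `(p-1) ∤ n-2` and `p ≥ 5` every summand is then divisible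
by `p³`: the term `i = n-1` vanishes, the term `i = n-2` is `B_{n-2} (n choose 2) p³/3`, and for
`i ≤ n-3` the factor `p^k/k` with `k = n+1-i ≥ 4` is divisible by `p⁴`. Applied to `n = l` and
`n = l+p-1` this shows
`p⁻²(S_{l+p-1}(p)/(l-1) - S_l(p)/l) ≡ p⁻¹(B_{l+p-1}/(l+p-1) - B_l/l) + E (mod p)` with
`E = B_{l+p-1}/((l+p-1)(l-1))`. For an irregular pair `E ≡ 0 (mod p)`, since
`B_{l+p-1}/(l+p-1) = p Δ + B_l/l` with `Δ` a `p`-integral quotient and `p ∣ B_l`.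
-/

open Finset

theorem sum_range_pow_sub_mul_bernoulli (p n : ℕ) :
    ∑ ν ∈ range p, (ν : ℚ) ^ n - p * bernoulli n =
      ∑ i ∈ range n,
        bernoulli i * n.choose i * (p : ℚ) ^ (n + 1 - i) / (n + 1 - i : ℕ) := by
  rw [sum_range_pow, sum_range_succ, Nat.choose_succ_self_right, Nat.add_sub_cancel_left,
    pow_one]
  have hn : (n + 1 : ℚ) ≠ 0 := by positivity
  rw [Nat.cast_succ, mul_comm (bernoulli n), mul_assoc, mul_div_cancel_left₀ _ hn,
    mul_comm (bernoulli n), add_sub_cancel_right]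
  refine sum_congr rfl fun i hi => ?_
  have hi : i < n + 1 := by grind
  have hchoose : ((n + 1).choose i : ℚ) * (n + 1 - i : ℕ) = n.choose i * (n + 1) := by
    exact_mod_cast (Nat.choose_mul_succ_eq n i).symm
  have hni : ((n + 1 - i : ℕ) : ℚ) ≠ 0 := Nat.cast_ne_zero.mpr (by omega)
  field_simp
  linear_combination bernoulli i * (p : ℚ) ^ (n + 1 - i) * hchoose

theorem add_four_le_of_pow_dvd {p v k : ℕ} (hp : 5 ≤ p) (hk : 4 ≤ k) (hdvd : p ^ v ∣ k) :
    v + 4 ≤ k := by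
  rcases Nat.eq_zero_or_pos v with rfl | hv
  · omega
  have hpow : 1 + v * 4 ≤ 5 ^ v := by
    have := one_add_mul_le_pow (a := (4 : ℤ)) (by norm_num) v
    norm_num at this
    exact_mod_cast this
  calc v + 4 ≤ 5 ^ v := by omega
    _ ≤ p ^ v := Nat.pow_le_pow_left hp v
    _ ≤ k := Nat.le_of_dvd (by omega) hdvd

theorem exists_bernoulli_two_mul_eq_sub (k : ℕ) : ∃ z : ℤ, bernoulli (2 * k) =
    z - ∑ q ∈ range (2 * k + 2) with q.Prime ∧ (q - 1) ∣ 2 * k, (1 : ℚ) / q := by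
  obtain ⟨z, hz⟩ := Bernoulli.vonStaudt_clausen k
  exact ⟨z, eq_sub_of_add_eq hz.symm⟩

section PadicNorm

variable {p : ℕ} [Fact p.Prime]

theorem padicNorm_lt_one_iff_dvd_num (r : ℚ) : padicNorm p r < 1 ↔ (p : ℤ) ∣ r.num := by
  rw [← padicNorm.int_lt_one_iff]
  constructor
  · intro h
    rw [← Rat.mul_den_eq_num, padicNorm.mul]
    exact (mul_le_of_le_one_right (padicNorm.nonneg _) (padicNorm.of_nat _)).trans_lt h
  · intro h
    have hden : ¬ p ∣ r.den := fun hd =>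
      (Fact.out : p.Prime).one_lt.ne' (Nat.eq_one_of_dvd_coprimes r.reduced
        (Int.natCast_dvd.mp ((padicNorm.int_lt_one_iff _).mp h)) hd)
    rwa [← Rat.num_div_den r, padicNorm.div, (padicNorm.nat_eq_one_iff _).mpr hden, div_one]

theorem padicNorm_natCast_eq_one_of_lt {c : ℕ} (h0 : 0 < c) (hc : c < p) :
    padicNorm p c = 1 :=
  (padicNorm.nat_eq_one_iff c).mpr (Nat.not_dvd_of_pos_of_lt h0 hc)

theorem padicNorm_one_div_prime_of_ne {q : ℕ} (hq : q.Prime) (hqp : q ≠ p) :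
    padicNorm p (1 / q) = 1 := by
  have := Fact.mk hq
  rw [padicNorm.div, padicNorm.one, padicNorm.padicNorm_of_prime_of_ne hqp.symm, div_one]

theorem padicNorm_one_div_prime_le {q : ℕ} (hq : q.Prime) : padicNorm p (1 / q) ≤ p := by
  rcases eq_or_ne q p with rfl | hqp
  · rw [padicNorm.div, padicNorm.one, padicNorm.padicNorm_p_of_prime, one_div, inv_inv]
  · rw [padicNorm_one_div_prime_of_ne hq hqp]
    exact_mod_cast (Fact.out : p.Prime).one_le

theorem padicNorm_bernoulli_le (n : ℕ) : padicNorm p (bernoulli n) ≤ p := by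
  have hp : (1 : ℚ) ≤ p := by exact_mod_cast (Fact.out : p.Prime).one_le
  rcases Nat.even_or_odd n with hn | hn
  · obtain ⟨k, rfl⟩ := even_iff_two_dvd.mp hn
    obtain ⟨z, hz⟩ := exists_bernoulli_two_mul_eq_sub k
    rw [hz]
    refine padicNorm.sub.trans (max_le ((padicNorm.of_int z).trans hp)
      (padicNorm.sum_le' (fun q hq => ?_) (zero_le_one.trans hp)))
    exact padicNorm_one_div_prime_le (mem_filter.mp hq).2.1
  rcases eq_or_ne n 1 with rfl | hn1
  · rw [bernoulli_one, neg_div, padicNorm.neg]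
    exact padicNorm_one_div_prime_le Nat.prime_two
  · rw [bernoulli_eq_zero_of_odd hn (by grind), padicNorm.zero]
    positivity

theorem padicNorm_bernoulli_le_one {n : ℕ} (hn : Even n) (hpn : ¬ (p - 1) ∣ n) :
    padicNorm p (bernoulli n) ≤ 1 := by
  obtain ⟨k, rfl⟩ := even_iff_two_dvd.mp hn
  obtain ⟨z, hz⟩ := exists_bernoulli_two_mul_eq_sub k
  rw [hz]
  refine padicNorm.sub.trans (max_le (padicNorm.of_int z)
    (padicNorm.sum_le' (fun q hq => ?_) zero_le_one))
  obtain ⟨hq, hqk⟩ := (mem_filter.mp hq).2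
  exact (padicNorm_one_div_prime_of_ne hq (by rintro rfl; exact hpn hqk)).le

theorem padicNorm_prime_pow_div_le {k : ℕ} (hp : 5 ≤ p) (hk : 4 ≤ k) :
    padicNorm p ((p : ℚ) ^ k / k) ≤ (p : ℚ)⁻¹ ^ 4 := by
  obtain ⟨v, m, hm, hkm⟩ := Nat.exists_eq_pow_mul_and_not_dvd (by omega : k ≠ 0) p
    (Fact.out : p.Prime).ne_one
  have hv : v + 4 ≤ k := add_four_le_of_pow_dvd hp hk (hkm ▸ dvd_mul_right _ _)
  have hp0 : (p : ℚ) ≠ 0 := by exact_mod_cast (Fact.out : p.Prime).ne_zero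
  have hsplit : (p : ℚ) ^ k / k = p ^ (k - v) / m := by
    have hk' : (k : ℚ) = p ^ v * m := by rw [hkm]; push_cast; rfl
    have hm0 : (m : ℚ) ≠ 0 := by rintro h; simp_all
    rw [hk', div_mul_eq_div_div, div_left_inj' hm0, div_eq_iff (pow_ne_zero _ hp0), ← pow_add,
      Nat.sub_add_cancel (by omega)]
  rw [hsplit, padicNorm.div, (padicNorm.nat_eq_one_iff m).mpr hm, div_one,
    IsAbsoluteValue.abv_pow (padicNorm p), padicNorm.padicNorm_p_of_prime]
  exact pow_le_pow_of_le_one (by positivity)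
    (inv_le_one_of_one_le₀ (by exact_mod_cast (Fact.out : p.Prime).one_le)) (by omega)

theorem padicNorm_sum_range_pow_sub_mul_bernoulli_le (hp : 5 ≤ p) {n : ℕ} (hn : Even n)
    (hn4 : 4 ≤ n) (hpn : ¬ (p - 1) ∣ n - 2) :
    padicNorm p (∑ ν ∈ range p, (ν : ℚ) ^ n - p * bernoulli n) ≤ (p : ℚ)⁻¹ ^ 3 := by
  have hp0 : (0 : ℚ) < p := by exact_mod_cast (Fact.out : p.Prime).pos
  have hchoose : ∀ i, padicNorm p (n.choose i) ≤ 1 := fun i => padicNorm.of_nat _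
  rw [sum_range_pow_sub_mul_bernoulli]
  refine padicNorm.sum_le' (fun i hi => ?_) (by positivity)
  rw [mul_div_assoc, padicNorm.mul, padicNorm.mul]
  obtain rfl | rfl | hi3 : i = n - 1 ∨ i = n - 2 ∨ i + 3 ≤ n := by grind
  · rw [bernoulli_eq_zero_of_odd (Nat.Even.sub_odd (by omega) hn odd_one) (by omega),
      padicNorm.zero, zero_mul, zero_mul]
    positivity
  · have h3 : ¬ p ∣ 3 := Nat.not_dvd_of_pos_of_lt (by norm_num) (by omega)
    rw [show n + 1 - (n - 2) = 3 by omega, padicNorm.div, (padicNorm.nat_eq_one_iff 3).mpr h3,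
      div_one, IsAbsoluteValue.abv_pow (padicNorm p), padicNorm.padicNorm_p_of_prime]
    calc _ ≤ 1 * 1 * (p : ℚ)⁻¹ ^ 3 :=
          mul_le_mul_of_nonneg_right
            (mul_le_mul (padicNorm_bernoulli_le_one (hn.tsub even_two) hpn) (hchoose _)
              (padicNorm.nonneg _) zero_le_one) (by positivity)
      _ = _ := by ring
  · calc _ ≤ p * 1 * (p : ℚ)⁻¹ ^ 4 :=
          mul_le_mul (mul_le_mul (padicNorm_bernoulli_le i) (hchoose _) (padicNorm.nonneg _)
            hp0.le) (padicNorm_prime_pow_div_le hp (by omega)) (padicNorm.nonneg _) (by positivity)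
      _ = (p : ℚ)⁻¹ ^ 3 := by field_simp

theorem padicNorm_div_mul_sq_lt_one {x c : ℚ} (hx : padicNorm p x ≤ (p : ℚ)⁻¹ ^ 3)
    (hc : padicNorm p c = 1) : padicNorm p (x / (c * (p : ℚ) ^ 2)) < 1 := by
  have hp0 : (0 : ℚ) < p := by exact_mod_cast (Fact.out : p.Prime).pos
  have hp1 : (p : ℚ)⁻¹ < 1 :=
    inv_lt_one_of_one_lt₀ (by exact_mod_cast (Fact.out : p.Prime).one_lt)
  rw [padicNorm.div, padicNorm.mul, hc, one_mul, IsAbsoluteValue.abv_pow (padicNorm p),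
    padicNorm.padicNorm_p_of_prime, div_lt_one (by positivity)]
  calc padicNorm p x ≤ (p : ℚ)⁻¹ * (p : ℚ)⁻¹ ^ 2 := by rwa [← pow_succ']
    _ < 1 * (p : ℚ)⁻¹ ^ 2 := by gcongr
    _ = (p : ℚ)⁻¹ ^ 2 := one_mul _

theorem padicNorm_sum_range_pow_div_sq_sub_lt_one (hp : Odd p) {l : ℕ} (hl4 : 4 ≤ l)
    (hlp : l + 3 ≤ p) (hle : Even l) :
    padicNorm p (((∑ ν ∈ range p, (ν : ℚ) ^ (l + p - 1)) / (l - 1) -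
        (∑ ν ∈ range p, (ν : ℚ) ^ l) / l) / p ^ 2 -
      ((bernoulli (l + p - 1) / (l + p - 1) - bernoulli l / l) / p +
        bernoulli (l + p - 1) / (l + p - 1) / (l - 1))) < 1 := by
  have hp5 : 5 ≤ p := by omega
  have hpl : ¬ (p - 1) ∣ l - 2 := Nat.not_dvd_of_pos_of_lt (by omega) (by omega)
  have hpN : ¬ (p - 1) ∣ l + p - 1 - 2 := by
    rwa [show l + p - 1 - 2 = l - 2 + (p - 1) by omega, Nat.dvd_add_self_right]
  have hN := padicNorm_sum_range_pow_sub_mul_bernoulli_le hp5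
    (Nat.Odd.sub_odd (hle.add_odd hp) odd_one) (by omega) hpN
  have hl := padicNorm_sum_range_pow_sub_mul_bernoulli_le hp5 hle hl4 hpl
  have hunit_l : padicNorm p (l : ℚ) = 1 := padicNorm_natCast_eq_one_of_lt (by omega) (by omega)
  have hunit_l1 : padicNorm p ((l : ℚ) - 1) = 1 := by
    rw [← Nat.cast_pred (by omega)]
    exact padicNorm_natCast_eq_one_of_lt (by omega) (by omega)
  have hl4' : (4 : ℚ) ≤ l := by exact_mod_cast hl4
  have hp0 : (p : ℚ) ≠ 0 := by exact_mod_cast (Fact.out : p.Prime).ne_zero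
  have hl0 : (l : ℚ) ≠ 0 := by positivity
  have hl1 : (l : ℚ) - 1 ≠ 0 := by linarith
  have hN0 : (l : ℚ) + p - 1 ≠ 0 := by linarith [(p.cast_nonneg : (0 : ℚ) ≤ p)]
  refine (congrArg (padicNorm p) ?_).trans_lt (padicNorm.sub.trans_lt
    (max_lt (padicNorm_div_mul_sq_lt_one hN hunit_l1) (padicNorm_div_mul_sq_lt_one hl hunit_l)))
  field_simp
  ring

theorem padicNorm_lt_one_of_sub_div_le_one {a b : ℚ} (h : padicNorm p ((a - b) / p) ≤ 1)
    (hb : padicNorm p b < 1) : padicNorm p a < 1 := by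
  have hp0 : (p : ℚ) ≠ 0 := by exact_mod_cast (Fact.out : p.Prime).ne_zero
  rw [← sub_add_cancel a b, ← mul_div_cancel₀ (a - b) hp0]
  refine padicNorm.nonarchimedean.trans_lt (max_lt ?_ hb)
  rw [padicNorm.mul]
  exact (mul_le_of_le_one_right (padicNorm.nonneg _) h).trans_lt
    padicNorm.padicNorm_p_lt_one_of_prime

end PadicNorm

theorem stmt_10_general (p l d : ℕ) (hp : p.Prime) (hodd : Odd p)
    (hl2 : 2 ≤ l) (hlp : l ≤ p - 3) (hle : Even l)
    (hirr : (p : ℤ) ∣ (bernoulli l).num)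
    (hΔ : (p : ℤ) ∣
      ((bernoulli (l + p - 1) / (l + p - 1) - bernoulli l / l) / p - d).num) :
    (p : ℤ) ∣
      (((∑ ν ∈ Finset.range p, (ν : ℚ)^(l + p - 1)) / (l - 1) -
          (∑ ν ∈ Finset.range p, (ν : ℚ)^l) / l) / p^2 - d).num := by
  have := Fact.mk hp
  have hl4 : 4 ≤ l := by
    obtain ⟨k, rfl⟩ := hle
    obtain rfl | hk : k = 1 ∨ 2 ≤ k := by omega
    · rw [bernoulli_two] at hirr
      norm_num at hirr
      exact absurd (Int.natCast_dvd_natCast.mp hirr) hp.not_dvd_one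
    · omega
  rw [← padicNorm_lt_one_iff_dvd_num] at hirr hΔ ⊢
  set X := (bernoulli (l + p - 1) / (l + p - 1) - bernoulli l / l) / p
  set E := bernoulli (l + p - 1) / (l + p - 1) / (l - 1)
  have hX : padicNorm p X ≤ 1 := by
    rw [← sub_add_cancel X d]
    exact padicNorm.nonarchimedean.trans (max_le hΔ.le (padicNorm.of_nat d))
  have hE : padicNorm p E < 1 := by
    rw [padicNorm.div, ← Nat.cast_pred (by omega),
      padicNorm_natCast_eq_one_of_lt (by omega) (by omega), div_one]
    refine padicNorm_lt_one_of_sub_div_le_one hX ?_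
    rwa [padicNorm.div, padicNorm_natCast_eq_one_of_lt (by omega) (by omega), div_one]
  have hkey := padicNorm_sum_range_pow_div_sq_sub_lt_one hodd hl4 (by omega) hle
  rw [show ∀ T : ℚ, T - d = (T - (X + E)) + (E + (X - d)) from fun T => by ring]
  exact padicNorm.nonarchimedean.trans_lt
    (max_lt hkey (padicNorm.nonarchimedean.trans_lt (max_lt hE hΔ)))

/-- For an irregular pair `(p, l)` with
`Δ_{(p,l)} ≡ p⁻¹(B_{l+p-1}/(l+p-1) - B_l/l) (mod p)`, `0 ≤ Δ_{(p,l)} < p`,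
one has `Δ_{(p,l)} ≡ p⁻²(S_{l+p-1}(p)/(l-1) - S_l(p)/l) (mod p)`. -/
theorem stmt_10 (p l d : ℕ) (hp : p.Prime) (hodd : Odd p)
    (hl2 : 2 ≤ l) (hlp : l ≤ p - 3) (hle : Even l)
    (hirr : (p : ℤ) ∣ (bernoulli l).num)
    (hd : d < p)
    (hΔ : (p : ℤ) ∣
      ((bernoulli (l + p - 1) / (l + p - 1) - bernoulli l / l) / p - d).num) :
    (p : ℤ) ∣
      (((∑ ν ∈ Finset.range p, (ν : ℚ)^(l + p - 1)) / (l - 1) -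
          (∑ ν ∈ Finset.range p, (ν : ℚ)^l) / l) / p^2 - d).num :=
  stmt_10_general p l d hp hodd hl2 hlp hle hirr hΔ
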